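/- arXiv:2501.13456 — 7 statements merged into one kernel-verified Lean document; each statement's English description precedes it below -/
import Mathlib

section
/- Let d ≥ 2, N = d², and let P be the N×d matrix with P_{j,k} = ((j+k−2) mod N) + 1. Then the maximum ranking distance of the linear-transformation family S_LT on P satisfies MRD(S_LT, P) ≥ sqrt( (N³ − N − d³ + 3d² − 2d) / 12 ). -/
/-!
Reversing the order of the rows gives the rank vector `r = (N + 1) • 𝟙 - v`, where `v = (1, …, N)`
is the first column of `P`. Column `k` of `P` is `v + k • 𝟙 - N • 𝟙_{last k rows}`, so `c` is
orthogonal to every column iff `⟪c, v⟫ = 0`, `c` equals some `t` on the last `d - 1` rows and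
`∑ c = N t`. For such `c` and every `w`, Cauchy–Schwarz gives
`‖P w - r‖ ≥ |⟪c, r⟫| / ‖c‖ = N (N + 1) |t| / ‖c‖`. With `m = N - d`, `K = m (m + 1) (m + 2)` and
`c = K • 𝟙 - 3 N (N + 1) • ramp`, where `ramp j = 2 j - m` for `j ≤ m` and `0` beyond, one gets
`‖c‖² = N K (K + 3 N (N + 1)²)`, and the claim reduces to the polynomial inequalities
`4 T ≤ K` and `4 T ≤ N (N + 1)²` for the target `T`.
-/

noncomputable section

/-- The alignment matrix `P` with `N = d²` rows: the `(j,k)` entry (0-based indices)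
is `((j + k) % N) + 1`, i.e. `((j + k − 2) mod N) + 1` for 1-based indices. -/
def Pmat (d : ℕ) (j : Fin (d ^ 2)) (k : Fin d) : ℝ :=
  ((((j : ℕ) + (k : ℕ)) % d ^ 2 + 1 : ℕ) : ℝ)

/-- The linear-transformation scoring family `S_LT = { x ↦ ⟨w, x⟩ }`. -/
def SLT (d : ℕ) : Set ((Fin d → ℝ) → ℝ) :=
  {s | ∃ w : Fin d → ℝ, s = fun x => ∑ k, w k * x k}

/-- Maximum ranking distance of a family `S` of scoring functions on the rows of `P`:
the maximum over permutations `π` of `{1,…,N}` of the infimum over `s ∈ S` of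
`sqrt (Σ_j (s(P_j) − π⁻¹(j))²)`. -/
def MRD {d : ℕ} (S : Set ((Fin d → ℝ) → ℝ)) : ℝ :=
  ⨆ π : Equiv.Perm (Fin (d ^ 2)),
    ⨅ s : S,
      Real.sqrt (∑ j : Fin (d ^ 2),
        (s.1 (fun k => Pmat d j k) - (((π.symm j : ℕ) : ℝ) + 1)) ^ 2)

open Finset

lemma sum_range_of_quadratic {f : ℕ → ℝ} {a b c : ℝ} (hf : ∀ j, f j = a + b * j + c * j ^ 2)
    (n : ℕ) :
    ∑ j ∈ range n, f j = n * a + b * (n * (n - 1) / 2) + c * (n * (n - 1) * (2 * n - 1) / 6) := by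
  induction n with
  | zero => simp
  | succ n ih => rw [sum_range_succ, ih, hf]; push_cast; ring

lemma sum_range_ite_le {m n : ℕ} (hmn : m < n) (f : ℕ → ℝ) :
    ∑ j ∈ range n, (if j ≤ m then f j else 0) = ∑ j ∈ range (m + 1), f j := by
  rw [← sum_filter]
  congr 1
  ext j
  simp only [mem_filter, mem_range]
  omega

def ramp (m j : ℕ) : ℝ := if j ≤ m then 2 * j - m else 0

section ramp

variable {m n : ℕ}

lemma ramp_of_lt {j : ℕ} (h : m < j) : ramp m j = 0 := if_neg (not_le.mpr h)

lemma sum_ramp (hmn : m < n) : ∑ j ∈ range n, ramp m j = 0 := by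
  simp only [ramp]
  rw [sum_range_ite_le hmn, sum_range_of_quadratic (a := -m) (b := 2) (c := 0) fun j => by ring]
  push_cast
  ring

lemma sum_ramp_mul_succ (hmn : m < n) :
    ∑ j ∈ range n, ramp m j * (j + 1) = m * (m + 1) * (m + 2) / 6 := by
  simp only [ramp, ite_mul, zero_mul]
  rw [sum_range_ite_le hmn,
    sum_range_of_quadratic (a := -m) (b := 2 - m) (c := 2) fun j => by ring]
  push_cast
  ring

lemma sum_ramp_sq (hmn : m < n) :
    ∑ j ∈ range n, ramp m j ^ 2 = m * (m + 1) * (m + 2) / 3 := by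
  simp only [ramp, ite_pow, ne_eq, OfNat.ofNat_ne_zero, not_false_eq_true, zero_pow]
  rw [sum_range_ite_le hmn,
    sum_range_of_quadratic (a := m ^ 2) (b := -4 * m) (c := 4) fun j => by ring]
  push_cast
  ring

end ramp

lemma sqrt_le_MRD {d : ℕ} {S : Set ((Fin d → ℝ) → ℝ)} (hS : S.Nonempty)
    (π : Equiv.Perm (Fin (d ^ 2))) {b : ℝ}
    (h : ∀ s ∈ S,
      b ≤ ∑ j : Fin (d ^ 2), (s (fun k => Pmat d j k) - (((π.symm j : ℕ) : ℝ) + 1)) ^ 2) :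
    √b ≤ MRD S :=
  have : Nonempty S := hS.to_subtype
  le_ciSup_of_le (Set.finite_range _).bddAbove π (le_ciInf fun s => Real.sqrt_le_sqrt (h s s.2))

lemma Pmat_eq_ite {d : ℕ} (j : Fin (d ^ 2)) (k : Fin d) :
    Pmat d j k = j + k + 1 - d ^ 2 * if d ^ 2 ≤ j + k then 1 else 0 := by
  have hk : (k : ℕ) < d ^ 2 := k.2.trans_le (Nat.le_self_pow two_ne_zero d)
  unfold Pmat
  split_ifs with h
  · rw [Nat.mod_eq_sub_mod h, Nat.mod_eq_of_lt (by omega)]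
    push_cast [h]
    ring
  · rw [Nat.mod_eq_of_lt (by omega)]
    push_cast
    ring

lemma sum_mul_Pmat_eq_zero {d : ℕ} {c : ℕ → ℝ} {t : ℝ}
    (hv : ∑ j ∈ range (d ^ 2), c j * (j + 1) = 0)
    (hsum : ∑ j ∈ range (d ^ 2), c j = d ^ 2 * t)
    (htail : ∀ j, d ^ 2 - d < j → c j = t) (k : Fin d) :
    ∑ j : Fin (d ^ 2), c j * Pmat d j k = 0 := by
  have hk : (k : ℕ) < d ^ 2 := k.2.trans_le (Nat.le_self_pow two_ne_zero d)
  have hwrap : ∑ j ∈ range (d ^ 2), c j * (if d ^ 2 ≤ j + k then 1 else 0) = k * t := by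
    have hIco : {j ∈ range (d ^ 2) | d ^ 2 ≤ j + k} = Ico (d ^ 2 - k) (d ^ 2) := by
      ext j
      simp only [mem_filter, mem_range, mem_Ico]
      omega
    simp only [mul_ite, mul_one, mul_zero]
    rw [← sum_filter, hIco, sum_congr rfl fun j hj => htail j (by have := (mem_Ico.mp hj).1; omega),
      sum_const, Nat.card_Ico, nsmul_eq_mul, Nat.sub_sub_self hk.le]
  simp_rw [Pmat_eq_ite]
  rw [Fin.sum_univ_eq_sum_range
    (fun j => c j * ((j : ℝ) + k + 1 - d ^ 2 * if d ^ 2 ≤ j + k then 1 else 0))]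
  have hsplit : ∀ j : ℕ, c j * ((j : ℝ) + k + 1 - d ^ 2 * if d ^ 2 ≤ j + k then 1 else 0) =
      c j * (j + 1) + k * c j - d ^ 2 * (c j * if d ^ 2 ≤ j + k then 1 else 0) := fun j => by ring
  rw [sum_congr rfl fun j _ => hsplit j, sum_sub_distrib, sum_add_distrib, ← mul_sum, ← mul_sum,
    hv, hsum, hwrap]
  ring

lemma sqrt_le_MRD_SLT {d : ℕ} {c : ℕ → ℝ} {t : ℝ}
    (hv : ∑ j ∈ range (d ^ 2), c j * (j + 1) = 0)
    (hsum : ∑ j ∈ range (d ^ 2), c j = d ^ 2 * t)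
    (htail : ∀ j, d ^ 2 - d < j → c j = t) :
    √((d ^ 2 * (d ^ 2 + 1) * t) ^ 2 / ∑ j ∈ range (d ^ 2), c j ^ 2) ≤ MRD (SLT d) := by
  refine sqrt_le_MRD (S := SLT d) ⟨_, 0, rfl⟩ Fin.revPerm ?_
  rintro _ ⟨w, rfl⟩
  have hrank (j : Fin (d ^ 2)) : (((Fin.revPerm.symm j : ℕ) : ℝ) + 1) = d ^ 2 - j := by
    rw [Fin.revPerm_symm, Fin.revPerm_apply, Fin.val_rev, Nat.cast_sub j.2]
    push_cast
    ring
  have hfit : ∑ j : Fin (d ^ 2), c j * ∑ k, w k * Pmat d j k = 0 := by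
    simp_rw [mul_sum, mul_left_comm (c _)]
    rw [sum_comm]
    exact sum_eq_zero fun k _ => by rw [← mul_sum, sum_mul_Pmat_eq_zero hv hsum htail k, mul_zero]
  have hres : ∑ j : Fin (d ^ 2), c j * ((d : ℝ) ^ 2 - j) = d ^ 2 * (d ^ 2 + 1) * t := by
    rw [Fin.sum_univ_eq_sum_range (fun j => c j * ((d : ℝ) ^ 2 - j)),
      sum_congr rfl fun j _ =>
        show c j * ((d : ℝ) ^ 2 - j) = (d ^ 2 + 1) * c j - c j * (j + 1) by ring,
      sum_sub_distrib, ← mul_sum, hsum, hv]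
    ring
  have hce : ∑ j : Fin (d ^ 2), c j * (∑ k, w k * Pmat d j k - (d ^ 2 - j)) =
      -(d ^ 2 * (d ^ 2 + 1) * t) := by
    rw [← hres, ← zero_sub, ← hfit, ← sum_sub_distrib]
    simp only [mul_sub]
  simp only [hrank]
  rw [← neg_sq, ← hce, ← Fin.sum_univ_eq_sum_range (fun j => c j ^ 2)]
  exact div_le_of_le_mul₀ (by positivity) (by positivity)
    ((sum_mul_sq_le_sq_mul_sq _ _ _).trans_eq (mul_comm _ _))

-- Up to scaling, the component of `𝟙` orthogonal to the columns of `P`: the estimate is sharp.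
def cert (n m j : ℕ) : ℝ := m * (m + 1) * (m + 2) - 3 * n * (n + 1) * ramp m j

section cert

variable {m n : ℕ}

lemma cert_of_lt {j : ℕ} (h : m < j) : cert n m j = m * (m + 1) * (m + 2) := by
  rw [cert, ramp_of_lt h, mul_zero, sub_zero]

lemma sum_cert (hmn : m < n) : ∑ j ∈ range n, cert n m j = n * (m * (m + 1) * (m + 2)) := by
  simp only [cert, sum_sub_distrib, ← mul_sum, sum_ramp hmn, sum_const, card_range, nsmul_eq_mul]
  ring

lemma sum_cert_mul_succ (hmn : m < n) : ∑ j ∈ range n, cert n m j * (j + 1) = 0 := by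
  simp only [cert, sub_mul, mul_assoc, sum_sub_distrib, ← mul_sum, sum_ramp_mul_succ hmn,
    sum_range_of_quadratic (f := fun j => (j : ℝ) + 1) (a := 1) (b := 1) (c := 0) fun j => by ring]
  ring

lemma sum_cert_sq (hmn : m < n) :
    ∑ j ∈ range n, cert n m j ^ 2 =
      n * (m * (m + 1) * (m + 2)) * (m * (m + 1) * (m + 2) + 3 * n * (n + 1) ^ 2) := by
  simp only [cert, sub_sq, mul_pow, sum_add_distrib, sum_sub_distrib, ← mul_sum, mul_assoc,
    sum_ramp hmn, sum_ramp_sq hmn, sum_const, card_range, nsmul_eq_mul]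
  ring

end cert

lemma le_mul_div_add_three_mul {T K L : ℝ} (hK : 0 < K) (hL : 0 ≤ L) (hTK : 4 * T ≤ K)
    (hTL : 4 * T ≤ L) : T ≤ L * K / (K + 3 * L) := by
  rw [le_div_iff₀ (by positivity)]
  nlinarith [mul_le_mul_of_nonneg_right hTL hK.le, mul_le_mul_of_nonneg_right hTK hL]

/-- MRD of linear transformation-based attention:
`MRD(S_LT, P) ≥ sqrt((N³ − N − d³ + 3d² − 2d)/12)` where `N = d²`. -/
theorem mrd_linear_lower_bound (d : ℕ) (hd : 2 ≤ d) :
    Real.sqrt ((((d : ℝ) ^ 2) ^ 3 - (d : ℝ) ^ 2 - (d : ℝ) ^ 3 + 3 * (d : ℝ) ^ 2 - 2 * (d : ℝ)) / 12)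
      ≤ MRD (SLT d) := by
  have hm : d ^ 2 - d < d ^ 2 := Nat.sub_lt (by positivity) (by omega)
  refine (Real.sqrt_le_sqrt ?_).trans
    (sqrt_le_MRD_SLT (sum_cert_mul_succ hm) (by rw [sum_cert hm, Nat.cast_pow]) fun j => cert_of_lt)
  have hmR : ((d ^ 2 - d : ℕ) : ℝ) = d ^ 2 - d := by
    push_cast [Nat.cast_sub (Nat.le_self_pow two_ne_zero d)]
    ring
  rw [sum_cert_sq hm, hmR]
  push_cast
  obtain ⟨x, hx, hdx⟩ : ∃ x : ℝ, 0 ≤ x ∧ (d : ℝ) = x + 2 := ⟨d - 2, by simp [hd], by ring⟩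
  have hK : 0 < ((d : ℝ) ^ 2 - d) * (d ^ 2 - d + 1) * (d ^ 2 - d + 2) := by
    have : (0 : ℝ) < d ^ 2 - d := by rw [hdx]; nlinarith
    positivity
  have hTK : 4 * ((((d : ℝ) ^ 2) ^ 3 - d ^ 2 - d ^ 3 + 3 * d ^ 2 - 2 * d) / 12) ≤
      (d ^ 2 - d) * (d ^ 2 - d + 1) * (d ^ 2 - d + 2) := by
    rw [hdx, ← sub_nonneg]; ring_nf; positivity
  have hTL : 4 * ((((d : ℝ) ^ 2) ^ 3 - d ^ 2 - d ^ 3 + 3 * d ^ 2 - 2 * d) / 12) ≤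
      d ^ 2 * (d ^ 2 + 1) ^ 2 := by
    rw [hdx, ← sub_nonneg]; ring_nf; positivity
  calc _ ≤ _ := le_mul_div_add_three_mul hK (by positivity) hTK hTL
    _ = _ := by field_simp

end
end

section
/- Let d ≥ 2, N = d², λ = d³ − 3d² + 2d, and let P be the N×d matrix with P_{j,k} = ((j+k−2) mod N) + 1. Then the maximum ranking distance of the two-layer MLP family S_MLP on P satisfies MRD(S_MLP, P) ≤ sqrt( (N³ − N − λ) / 12 ). -/
noncomputable section

/-- The two-layer MLP scoring family `S_MLP = { x ↦ ⟨w₂, ReLU(W₁x)⟩ }`. -/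
def SMLP (d : ℕ) : Set ((Fin d → ℝ) → ℝ) :=
  {s | ∃ (W₁ : Matrix (Fin d) (Fin d) ℝ) (w₂ : Fin d → ℝ),
    s = fun x => ∑ i, w₂ i * max (∑ k, W₁ i k * x k) 0}

open Finset

lemma sum_range_cast (n : ℕ) : ∑ i ∈ Finset.range n, (i:ℝ) = n*(n-1)/2 := by
  induction n with
  | zero => simp
  | succ n ih => rw [Finset.sum_range_succ, ih]; push_cast; ring

lemma sum_range_sq_cast (n : ℕ) : ∑ i ∈ Finset.range n, (i:ℝ)^2 = n*(n-1)*(2*n-1)/6 := by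
  induction n with
  | zero => simp
  | succ n ih => rw [Finset.sum_range_succ, ih]; push_cast; ring

lemma pair_identity {m : ℕ} (x : Fin m → ℝ) :
    ∑ i : Fin m, ∑ j : Fin m, (x i - x j)^2
      = 2*m*(∑ i, (x i)^2) - 2*(∑ i, x i)^2 := by
  have h : ∀ i j : Fin m, (x i - x j)^2 = (x i)^2 - 2*(x i * x j) + (x j)^2 := fun i j => by ring
  simp only [h, Finset.sum_add_distrib, Finset.sum_sub_distrib, ← Finset.mul_sum,
    ← Finset.sum_mul, Finset.sum_const, Finset.card_univ, Fintype.card_fin, nsmul_eq_mul]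
  ring_nf

lemma gap_lemma {m : ℕ} (g : Fin m → ℤ) (hs : StrictMono g)
    (hp : ∀ i j, (2:ℤ) ∣ (g i - g j)) :
    ∀ (a b : Fin m), a ≤ b → g a + 2*((b:ℤ) - (a:ℤ)) ≤ g b := by
  have step : ∀ (a b : Fin m), a < b → g a + 2 ≤ g b := by
    intro a b h
    have h1 : g a < g b := hs h
    obtain ⟨k, hk⟩ := hp b a
    omega
  intro a b hab
  obtain ⟨k, hk⟩ : ∃ k, (b:ℕ) = (a:ℕ) + k := ⟨(b:ℕ) - (a:ℕ), by omega⟩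
  induction k generalizing b with
  | zero =>
    have : a = b := Fin.ext (by omega)
    subst this; simp
  | succ k ih =>
    have hklt : (a:ℕ) + k < m := by omega
    set c : Fin m := ⟨(a:ℕ)+k, hklt⟩ with hc
    have h1 := ih c (by simp [hc, Fin.le_def]) rfl
    have h2 : g c + 2 ≤ g b := step c b (by rw [Fin.lt_def]; simp [hc]; omega)
    have hcv : (c:ℤ) = (a:ℤ) + k := by simp [hc]
    have hbv : (b:ℤ) = (a:ℤ) + k + 1 := by exact_mod_cast congrArg (Nat.cast : ℕ → ℤ) hk
    omega

lemma sum_sq_lower {m : ℕ} (f : Fin m → ℤ) (hf : Function.Injective f)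
    (hp : ∀ i j, (2:ℤ) ∣ (f i - f j)) :
    (m:ℝ)*((m:ℝ)^2-1)/3 ≤ ∑ i : Fin m, ((f i : ℝ))^2 := by
  classical
  rcases Nat.eq_zero_or_pos m with hm | hm
  · subst hm; simp
  set S : Finset ℤ := Finset.image f Finset.univ with hS
  have hcard : S.card = m := by
    rw [hS, Finset.card_image_of_injective _ hf, Finset.card_univ, Fintype.card_fin]
  set g : Fin m → ℤ := fun i => (S.orderIsoOfFin hcard i : ℤ) with hg
  have hgs : StrictMono g := fun i j h => by
    have := (S.orderIsoOfFin hcard).strictMono h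
    exact_mod_cast this
  have hgmem : ∀ i, g i ∈ S := fun i => (S.orderIsoOfFin hcard i).2
  have hgp : ∀ i j, (2:ℤ) ∣ (g i - g j) := by
    intro i j
    obtain ⟨a, _, ha⟩ := Finset.mem_image.mp (hgmem i)
    obtain ⟨b, _, hb⟩ := Finset.mem_image.mp (hgmem j)
    rw [← ha, ← hb]; exact hp a b
  -- sums agree
  have hsum_eq : ∀ (F : ℤ → ℝ), ∑ i : Fin m, F (f i) = ∑ i : Fin m, F (g i) := by
    intro F
    have h1 : ∑ i : Fin m, F (f i) = ∑ z ∈ S, F z := by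
      rw [hS, Finset.sum_image (fun a _ b _ h => hf h)]
    have h2 : ∑ i : Fin m, F (g i) = ∑ z ∈ S, F z := by
      rw [← Finset.sum_attach S (fun z => F z)]
      exact (Equiv.sum_comp (S.orderIsoOfFin hcard).toEquiv (fun z => F (z:ℤ))).symm ▸ rfl
    rw [h1, h2]
  have key : ∀ i j : Fin m, (2*((i:ℝ) - (j:ℝ)))^2 ≤ ((g i : ℝ) - (g j : ℝ))^2 := by
    intro i j
    have hZ : (2*((i:ℤ) - (j:ℤ)))^2 ≤ (g i - g j)^2 := by
      rcases le_total i j with h | h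
      · have h1 := gap_lemma g hgs hgp i j h
        have h2 : (i:ℤ) ≤ (j:ℤ) := by exact_mod_cast (Fin.le_def.mp h)
        nlinarith
      · have h1 := gap_lemma g hgs hgp j i h
        have h2 : (j:ℤ) ≤ (i:ℤ) := by exact_mod_cast (Fin.le_def.mp h)
        nlinarith
    calc (2*((i:ℝ) - (j:ℝ)))^2 = (((2*((i:ℤ) - (j:ℤ)))^2 : ℤ) : ℝ) := by push_cast; ring
      _ ≤ (((g i - g j)^2 : ℤ) : ℝ) := by exact_mod_cast hZ
      _ = ((g i : ℝ) - (g j : ℝ))^2 := by push_cast; ring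
  have hdouble : ∑ i : Fin m, ∑ j : Fin m, (2*((i:ℝ) - (j:ℝ)))^2
      ≤ ∑ i : Fin m, ∑ j : Fin m, ((g i : ℝ) - (g j : ℝ))^2 :=
    Finset.sum_le_sum (fun i _ => Finset.sum_le_sum (fun j _ => key i j))
  have hL : ∑ i : Fin m, ∑ j : Fin m, (2*((i:ℝ) - (j:ℝ)))^2
      = 2*(m:ℝ)^2*((m:ℝ)^2-1)/3 := by
    have := pair_identity (fun i : Fin m => 2*(i:ℝ))
    have e1 : ∀ i j : Fin m, (2*((i:ℝ) - (j:ℝ)))^2 = (2*(i:ℝ) - 2*(j:ℝ))^2 := fun i j => by ring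
    simp only [e1]
    rw [this]
    have s1 : ∑ i : Fin m, (i:ℝ) = m*(m-1)/2 := by
      rw [Fin.sum_univ_eq_sum_range (fun i => (i:ℝ))]; exact sum_range_cast m
    have s2 : ∑ i : Fin m, ((i:ℝ))^2 = m*(m-1)*(2*m-1)/6 := by
      rw [Fin.sum_univ_eq_sum_range (fun i => (i:ℝ)^2)]; exact sum_range_sq_cast m
    have e2 : ∑ i : Fin m, (2*(i:ℝ))^2 = 4 * ∑ i : Fin m, ((i:ℝ))^2 := by
      rw [Finset.mul_sum]; exact Finset.sum_congr rfl (fun i _ => by ring)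
    have e3 : ∑ i : Fin m, 2*(i:ℝ) = 2 * ∑ i : Fin m, (i:ℝ) := by
      rw [Finset.mul_sum]
    rw [e2, e3, s1, s2]; ring
  have hR : ∑ i : Fin m, ∑ j : Fin m, ((g i : ℝ) - (g j : ℝ))^2
      = 2*(m:ℝ)*(∑ i : Fin m, ((g i : ℝ))^2) - 2*(∑ i : Fin m, ((g i : ℝ)))^2 :=
    pair_identity (fun i => ((g i : ℝ)))
  rw [hsum_eq (fun z => ((z:ℝ))^2)]
  have hm1 : (1:ℝ) ≤ (m:ℝ) := by exact_mod_cast hm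
  nlinarith [hdouble, hL.symm, hR, sq_nonneg (∑ i : Fin m, ((g i : ℝ)))]

def cc (d : ℕ) : ℝ := (((d:ℝ))^2+1)/2

def tgt (d : ℕ) (r : Fin (d^2) → ℝ) (n : ℕ) : ℝ :=
  if h : n < d^2 then (if n + d ≤ d^2 then cc d else r ⟨n, h⟩) else 0

def W1mat (d : ℕ) : Matrix (Fin d) (Fin d) ℝ := fun i k =>
  if (i:ℕ) = 0 then (if (k:ℕ) = 1 then 1 else 0) - (if (k:ℕ) = 0 then 1 else 0)
  else (if (k:ℕ) = 0 then 1 else 0) - (if (k:ℕ) = (i:ℕ) then 1 else 0)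

def w2f (d : ℕ) (r : Fin (d^2) → ℝ) (n : ℕ) : ℝ :=
  if n = 0 then cc d
  else (tgt d r (d^2 - n) - tgt d r (d^2 - n - 1) + (if n = 1 then cc d else 0))
        / ((d^2 - n : ℕ) : ℝ)

lemma hidden_eq (d : ℕ) (hd : 2 ≤ d) (j : Fin (d^2)) (i : Fin d) :
    max (∑ k, W1mat d i k * Pmat d j k) 0 =
      if (i:ℕ) = 0 then (if (j:ℕ) + 1 < d^2 then 1 else 0)
      else (if d^2 ≤ (j:ℕ) + (i:ℕ) then ((d^2 - (i:ℕ) : ℕ):ℝ) else 0) := by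
  have hN : (j:ℕ) < d^2 := j.2
  have hdN : d ≤ d^2 := Nat.le_self_pow (by norm_num) d
  have hiN : (i:ℕ) < d := i.2
  -- single-indicator sum
  have ind : ∀ a : ℕ, a < d → ∑ k : Fin d, (if (k:ℕ) = a then (1:ℝ) else 0) * Pmat d j k
      = (((j:ℕ) + a) % d^2 + 1 : ℕ) := by
    intro a ha
    simp only [Pmat]
    rw [Fin.sum_univ_eq_sum_range (fun n => (if n = a then (1:ℝ) else 0) * ((((j:ℕ) + n) % d^2 + 1 : ℕ):ℝ))]
    rw [Finset.sum_eq_single a]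
    · simp
    · intro b _ hb; simp [hb]
    · intro h; exact absurd (Finset.mem_range.mpr ha) h
  by_cases hi : (i:ℕ) = 0
  · have hsum : ∑ k, W1mat d i k * Pmat d j k
        = ((((j:ℕ) + 1) % d^2 + 1 : ℕ):ℝ) - (((j:ℕ) % d^2 + 1 : ℕ):ℝ) := by
      have : ∀ k : Fin d, W1mat d i k * Pmat d j k
          = (if (k:ℕ) = 1 then (1:ℝ) else 0) * Pmat d j k
            - (if (k:ℕ) = 0 then (1:ℝ) else 0) * Pmat d j k := by
        intro k; simp only [W1mat, if_pos hi]; ring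
      rw [Finset.sum_congr rfl (fun k _ => this k), Finset.sum_sub_distrib,
        ind 1 (by omega), ind 0 (by omega)]
      simp
    rw [hsum, if_pos hi]
    rw [Nat.mod_eq_of_lt hN]
    by_cases hj : (j:ℕ) + 1 < d^2
    · rw [if_pos hj, Nat.mod_eq_of_lt hj]
      rw [max_eq_left (by push_cast; ring_nf; norm_num)]
      push_cast; ring
    · have hj1 : (j:ℕ) + 1 = d^2 := by omega
      rw [if_neg hj, hj1, Nat.mod_self]
      rw [max_eq_right ?_]
      have : (4:ℕ) ≤ d^2 := by nlinarith
      push_cast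
      have : (4:ℝ) ≤ ((d:ℝ))^2 := by exact_mod_cast this
      nlinarith
  · have hsum : ∑ k, W1mat d i k * Pmat d j k
        = (((j:ℕ) % d^2 + 1 : ℕ):ℝ) - ((((j:ℕ) + (i:ℕ)) % d^2 + 1 : ℕ):ℝ) := by
      have : ∀ k : Fin d, W1mat d i k * Pmat d j k
          = (if (k:ℕ) = 0 then (1:ℝ) else 0) * Pmat d j k
            - (if (k:ℕ) = (i:ℕ) then (1:ℝ) else 0) * Pmat d j k := by
        intro k; simp only [W1mat, if_neg hi]; ring
      rw [Finset.sum_congr rfl (fun k _ => this k), Finset.sum_sub_distrib,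
        ind 0 (by omega), ind (i:ℕ) hiN]
      norm_num
    rw [hsum, if_neg hi, Nat.mod_eq_of_lt hN]
    by_cases hji : d^2 ≤ (j:ℕ) + (i:ℕ)
    · rw [if_pos hji]
      have hmod : ((j:ℕ) + (i:ℕ)) % d^2 = (j:ℕ) + (i:ℕ) - d^2 := by
        rw [Nat.mod_eq_sub_mod hji, Nat.mod_eq_of_lt (by omega)]
      rw [hmod]
      rw [max_eq_left ?_]
      · have h1 : (j:ℕ) + 1 - ((j:ℕ) + (i:ℕ) - d^2 + 1) = d^2 - (i:ℕ) := by omega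
        rw [← Nat.cast_sub (by omega), h1]
      · have : (0:ℕ) < d^2 - (i:ℕ) := by omega
        have h1 : ((j:ℕ) + (i:ℕ) - d^2 + 1) ≤ (j:ℕ) + 1 := by omega
        have := Nat.cast_le (α := ℝ).mpr h1
        linarith
    · rw [if_neg hji, Nat.mod_eq_of_lt (by omega)]
      rw [max_eq_right ?_]
      have h1 : (j:ℕ) + 1 ≤ (j:ℕ) + (i:ℕ) + 1 := by omega
      have := Nat.cast_le (α := ℝ).mpr h1
      linarith

lemma score_eq (d : ℕ) (hd : 2 ≤ d) (r : Fin (d^2) → ℝ) (j : Fin (d^2)) :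
    ∑ i : Fin d, w2f d r (i:ℕ) * max (∑ k, (W1mat d) i k * Pmat d j k) 0
      = tgt d r (j:ℕ) := by
  have hN : (j:ℕ) < d^2 := j.2
  have hdN : d ≤ d^2 := Nat.le_self_pow (by norm_num) d
  have htgt_c : ∀ n : ℕ, n + d ≤ d^2 → tgt d r n = cc d := by
    intro n hn
    rw [tgt, dif_pos (by omega), if_pos hn]
  rw [Finset.sum_congr rfl (fun i _ => by rw [hidden_eq d hd j i])]
  obtain ⟨e, rfl⟩ : ∃ e, d = e + 2 := ⟨d - 2, by omega⟩
  set F : ℕ → ℝ := fun n => tgt (e+2) r ((e+2)^2 - n - 1) with hF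
  set u : ℕ := (e+2)^2 - 1 - (j:ℕ) with hu
  rw [Fin.sum_univ_eq_sum_range (fun n => w2f (e+2) r n *
    (if n = 0 then (if (j:ℕ) + 1 < (e+2)^2 then 1 else 0)
     else (if (e+2)^2 ≤ (j:ℕ) + n then (((e+2)^2 - n : ℕ):ℝ) else 0)))]
  rw [Finset.sum_range_succ']
  have hstep : ∀ n ∈ Finset.range (e+1),
      w2f (e+2) r (n+1) *
        (if n + 1 = 0 then (if (j:ℕ) + 1 < (e+2)^2 then 1 else 0)
         else (if (e+2)^2 ≤ (j:ℕ) + (n+1) then (((e+2)^2 - (n+1) : ℕ):ℝ) else 0))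
      = if u ≤ n then (F n - F (n+1) + (if n = 0 then cc (e+2) else 0)) else 0 := by
    intro n hn
    have hn' : n < e + 1 := Finset.mem_range.mp hn
    rw [if_neg (by omega)]
    have hcond : ((e+2)^2 ≤ (j:ℕ) + (n+1)) ↔ (u ≤ n) := by omega
    by_cases hc : u ≤ n
    · rw [if_pos (hcond.mpr hc), if_pos hc]
      rw [w2f, if_neg (by omega)]
      have hden : ((((e+2)^2 - (n+1) : ℕ)) : ℝ) ≠ 0 :=
        Nat.cast_ne_zero.mpr (by omega)
      rw [div_mul_cancel₀ _ hden]
      have hFn : F n = tgt (e+2) r ((e+2)^2 - (n+1)) :=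
        congrArg (tgt (e+2) r) (by omega : (e+2)^2 - n - 1 = (e+2)^2 - (n+1))
      have hFn1 : F (n+1) = tgt (e+2) r ((e+2)^2 - (n+1) - 1) :=
        congrArg (tgt (e+2) r) (by omega : (e+2)^2 - (n+1) - 1 = (e+2)^2 - (n+1) - 1)
      have e3 : (if n + 1 = 1 then cc (e+2) else 0) = (if n = 0 then cc (e+2) else 0) := by
        by_cases h0 : n = 0 <;> simp [h0]
      rw [hFn, hFn1, e3]
    · rw [if_neg (fun h => hc (hcond.mp h)), if_neg hc, mul_zero]
  rw [Finset.sum_congr rfl hstep]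
  rw [← Finset.sum_filter]
  have hfil : (Finset.range (e+1)).filter (fun n => u ≤ n) = Finset.Ico u (e+1) := by
    ext x; simp only [Finset.mem_filter, Finset.mem_Ico, Finset.mem_range]; omega
  rw [hfil]
  rw [Finset.sum_add_distrib]
  rw [Finset.sum_ite_eq' (Finset.Ico u (e+1)) 0 (fun _ => cc (e+2))]
  rw [Finset.sum_Ico_eq_sum_range]
  rw [show ∑ k ∈ Finset.range (e+1-u), (F (u + k) - F (u + k + 1))
        = F u - F (u + (e+1-u)) from Finset.sum_range_sub' (fun k => F (u + k)) (e+1-u)]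
  have hw0 : w2f (e+2) r 0 = cc (e+2) := by rw [w2f, if_pos rfl]
  rw [hw0, if_pos (rfl : (0:ℕ) = 0)]
  have hFe : F (e + 1) = cc (e+2) := htgt_c _ (by omega)
  have hFu : F u = tgt (e+2) r (j:ℕ) :=
    congrArg (tgt (e+2) r) (by omega : (e+2)^2 - u - 1 = (j:ℕ))
  rcases Nat.lt_or_ge u 1 with hu0 | hu1
  · -- u = 0 : j = N - 1
    rw [if_neg (by omega : ¬ ((j:ℕ) + 1 < (e+2)^2)), mul_zero]
    rw [if_pos (Finset.mem_Ico.mpr ⟨by omega, by omega⟩)]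
    have e4 : u + (e + 1 - u) = e + 1 := by omega
    rw [e4, hFe, hFu]; ring
  · rw [if_pos (by omega : (j:ℕ) + 1 < (e+2)^2), mul_one]
    rw [if_neg (fun hmem => by have := (Finset.mem_Ico.mp hmem).1; omega)]
    rcases Nat.lt_or_ge (e+1) u with hbig | hsmall
    · -- u > e+1 : empty telescope, tgt j = cc
      have e4 : e + 1 - u = 0 := by omega
      have hz : F u - F (u + 0) = 0 := sub_eq_zero_of_eq rfl
      rw [e4, hz, htgt_c (j:ℕ) (by omega)]
      ring
    · have e4 : u + (e + 1 - u) = e + 1 := by omega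
      rw [e4, hFe, hFu]; ring

lemma sum_centered (N : ℕ) :
    ∑ n ∈ Finset.range N, ((n:ℝ) + 1 - ((N:ℝ)+1)/2)^2 = ((N:ℝ)^3 - N)/12 := by
  have expand : ∀ n ∈ Finset.range N, ((n:ℝ)+1-((N:ℝ)+1)/2)^2
      = (n:ℝ)^2 + (2 - ((N:ℝ)+1)) * (n:ℝ) + (1-((N:ℝ)+1)/2)^2 := by
    intro n _; ring
  rw [Finset.sum_congr rfl expand, Finset.sum_add_distrib, Finset.sum_add_distrib,
    ← Finset.mul_sum, Finset.sum_const, Finset.card_range, sum_range_cast,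
    sum_range_sq_cast, nsmul_eq_mul]
  ring


/-- MRD of MLP-based attention, upper bound:
`MRD(S_MLP, P) ≤ sqrt((N³ − N − λ)/12)` where `N = d²` and `λ = d³ − 3d² + 2d`. -/
theorem mrd_mlp_upper_bound (d : ℕ) (hd : 2 ≤ d) :
    MRD (SMLP d) ≤
      Real.sqrt ((((d : ℝ) ^ 2) ^ 3 - (d : ℝ) ^ 2 -
        ((d : ℝ) ^ 3 - 3 * (d : ℝ) ^ 2 + 2 * (d : ℝ))) / 12) := by
  apply ciSup_le
  intro π
  have hd2 : 1 ≤ d^2 := by nlinarith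
  set r : Fin (d^2) → ℝ := fun j => ((π.symm j : ℕ) : ℝ) + 1 with hr
  set s : (Fin d → ℝ) → ℝ :=
    fun x => ∑ i : Fin d, w2f d r (i:ℕ) * max (∑ k, W1mat d i k * x k) 0 with hs
  have hmem : s ∈ SMLP d := ⟨W1mat d, fun i => w2f d r (i:ℕ), rfl⟩
  refine ciInf_le_of_le ⟨0, ?_⟩ (⟨s, hmem⟩ : SMLP d) ?_
  · rintro x ⟨t, rfl⟩; exact Real.sqrt_nonneg _
  · apply Real.sqrt_le_sqrt
    have hscore : ∀ j : Fin (d^2), s (fun k => Pmat d j k) = tgt d r (j:ℕ) :=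
      fun j => score_eq d hd r j
    have hptwise : ∀ j : Fin (d^2),
        (s (fun k => Pmat d j k) - (((π.symm j : ℕ) : ℝ) + 1))^2
          = (cc d - r j)^2 - (if d^2 < (j:ℕ) + d then (cc d - r j)^2 else 0) := by
      intro j
      rw [hscore j]
      have hrj : (((π.symm j : ℕ) : ℝ) + 1) = r j := rfl
      rw [hrj, tgt, dif_pos j.2]
      by_cases hc : (j:ℕ) + d ≤ d^2
      · rw [if_pos hc, if_neg (by omega)]; ring
      · rw [if_neg hc, if_pos (by omega)]
        ring
    calc ∑ j : Fin (d^2), (s (fun k => Pmat d j k) - (((π.symm j : ℕ) : ℝ) + 1))^2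
        = (∑ j : Fin (d^2), (cc d - r j)^2)
          - ∑ j : Fin (d^2), (if d^2 < (j:ℕ) + d then (cc d - r j)^2 else 0) := by
          rw [Finset.sum_congr rfl (fun j _ => hptwise j), Finset.sum_sub_distrib]
      _ ≤ ((((d : ℝ) ^ 2) ^ 3 - (d : ℝ) ^ 2 -
            ((d : ℝ) ^ 3 - 3 * (d : ℝ) ^ 2 + 2 * (d : ℝ))) / 12) := by
          have hdN2 : d ≤ d^2 := Nat.le_self_pow (by norm_num) d
          -- the full sum
          have hA : ∑ j : Fin (d^2), (cc d - r j)^2 = (((d:ℝ)^2)^3 - (d:ℝ)^2)/12 := by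
            have h1 : ∑ j : Fin (d^2), (cc d - r j)^2
                = ∑ i : Fin (d^2), (cc d - (((i:ℕ):ℝ)+1))^2 :=
              Equiv.sum_comp π.symm (fun i : Fin (d^2) => (cc d - (((i:ℕ):ℝ)+1))^2)
            rw [h1, Fin.sum_univ_eq_sum_range (fun n => (cc d - ((n:ℝ)+1))^2)]
            have h2 : ∀ n ∈ Finset.range (d^2), (cc d - ((n:ℝ)+1))^2
                = ((n:ℝ) + 1 - (((d^2:ℕ):ℝ)+1)/2)^2 := by
              intro n _; rw [cc]; push_cast; ring
            rw [Finset.sum_congr rfl h2, sum_centered (d^2)]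
            push_cast; ring
          -- the top-rows sum
          set rn : ℕ → ℝ := fun n => if h : n < d^2 then r ⟨n, h⟩ else 0 with hrn_def
          set F : ℕ → ℝ := fun n => if d^2 < n + d then (cc d - rn n)^2 else 0 with hF_def
          have hBrw : ∑ j : Fin (d^2), (if d^2 < (j:ℕ) + d then (cc d - r j)^2 else 0)
              = ∑ n ∈ Finset.range (d-1), (cc d - rn (d^2 - 1 - n))^2 := by
            have e0 : ∀ j : Fin (d^2),
                (if d^2 < (j:ℕ) + d then (cc d - r j)^2 else 0) = F (j:ℕ) := by
              intro j
              have hr2 : rn (j:ℕ) = r j := by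
                rw [hrn_def]; simp only []; rw [dif_pos j.2]
              rw [hF_def]; simp only []; rw [hr2]
            rw [Finset.sum_congr rfl (fun j _ => e0 j),
              Fin.sum_univ_eq_sum_range F (d^2), ← Finset.sum_range_reflect F (d^2)]
            have e1 : ∀ n ∈ Finset.range (d^2), F (d^2 - 1 - n)
                = if n + 1 < d then (cc d - rn (d^2-1-n))^2 else 0 := by
              intro n hn
              have hn' : n < d^2 := Finset.mem_range.mp hn
              rw [hF_def]; simp only []
              exact if_congr (by omega) rfl rfl
            rw [Finset.sum_congr rfl e1, ← Finset.sum_filter]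
            have e2 : (Finset.range (d^2)).filter (fun n => n + 1 < d)
                = Finset.range (d-1) := by
              ext a
              simp only [Finset.mem_filter, Finset.mem_range]
              omega
            rw [e2]
          set m := d - 1 with hm_def
          set idx : Fin m → Fin (d^2) := fun t => ⟨d^2 - 1 - (t:ℕ), by omega⟩ with hidx
          set fz : Fin m → ℤ :=
            fun t => 2*((π.symm (idx t) : ℕ) : ℤ) + 1 - (d^2 : ℤ) with hfz
          have hfinj : Function.Injective fz := by
            intro a b hab
            simp only [hfz] at hab
            have h1 : ((π.symm (idx a) : ℕ) : ℤ) = ((π.symm (idx b) : ℕ) : ℤ) := by omega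
            have h2 : π.symm (idx a) = π.symm (idx b) :=
              Fin.val_injective (by exact_mod_cast h1)
            have h3 : idx a = idx b := π.symm.injective h2
            have h4 : d^2 - 1 - (a:ℕ) = d^2 - 1 - (b:ℕ) := congrArg Fin.val h3
            have ha2 := a.2
            have hb2 := b.2
            exact Fin.ext (by omega)
          have hfpar : ∀ a b, (2:ℤ) ∣ (fz a - fz b) :=
            fun a b => ⟨((π.symm (idx a) : ℕ) : ℤ) - ((π.symm (idx b) : ℕ) : ℤ),
              by simp only [hfz]; ring⟩
          have hlow := sum_sq_lower fz hfinj hfpar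
          have hBeq : ∑ n ∈ Finset.range m, (cc d - rn (d^2-1-n))^2
              = (∑ t : Fin m, ((fz t : ℝ))^2)/4 := by
            rw [← Fin.sum_univ_eq_sum_range (fun n => (cc d - rn (d^2-1-n))^2) m,
              Finset.sum_div]
            apply Finset.sum_congr rfl
            intro t _
            have hlt : d^2 - 1 - (t:ℕ) < d^2 := by omega
            have hrn2 : rn (d^2-1-(t:ℕ)) = ((π.symm (idx t) : ℕ) : ℝ) + 1 := by
              rw [hrn_def]; simp only []; rw [dif_pos hlt]
            rw [hrn2, hfz, cc]
            simp only []
            push_cast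
            ring
          have hmcast : ((m:ℕ):ℝ) = (d:ℝ) - 1 := by
            rw [hm_def, Nat.cast_sub (by omega)]; simp
          have hring : ((((d : ℝ) ^ 2) ^ 3 - (d : ℝ) ^ 2 -
              ((d : ℝ) ^ 3 - 3 * (d : ℝ) ^ 2 + 2 * (d : ℝ))) / 12)
              = (((d:ℝ)^2)^3 - (d:ℝ)^2)/12
                - ((((d:ℝ)-1)*(((d:ℝ)-1)^2-1))/3)/4 := by ring
          rw [hA, hBrw, hBeq, hring]
          rw [hmcast] at hlow
          linarith

end
end

section
/- Let d ≥ 2, N = d², and let P be the N×d matrix with P_{j,k} = ((j+k−2) mod N) + 1. Then for every real δ > 0, the maximum ranking distance of the Kolmogorov–Arnold attention family S_KAA on P satisfies MRD(S_KAA, P) ≤ δ. -/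
noncomputable section

lemma jk_facts (d : ℕ) (hd : 2 ≤ d) (j : ℕ) (hj : j < d ^ 2) :
    j + (d - 1 - j % d) < d ^ 2 ∧ j + (d - 1 - j % d) + 1 = (j / d + 1) * d := by
  have hd0 : 0 < d := by omega
  have hdm : d * (j / d) + j % d = j := Nat.div_add_mod j d
  have hr : j % d < d := Nat.mod_lt _ hd0
  have hq : j / d < d := by
    rw [Nat.div_lt_iff_lt_mul hd0]; rwa [pow_two] at hj
  have h1 : d * (j / d) + d ≤ d * d := by
    have := Nat.mul_le_mul_left d (show j / d + 1 ≤ d from hq)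
    rwa [mul_add, mul_one] at this
  constructor
  · rw [pow_two]; omega
  · rw [add_mul, one_mul, mul_comm]; omega

lemma nat_key (d : ℕ) (hd : 2 ≤ d) (j : ℕ) (hj : j < d ^ 2) (k l : ℕ) (hk : k < d) (hl : l < d) :
    ((j + k) % d ^ 2 + 1 = (l + 1) * d) ↔ (k = d - 1 - j % d ∧ l = j / d) := by
  have hd0 : 0 < d := by omega
  obtain ⟨hlt, heq⟩ := jk_facts d hd j hj
  have hr : j % d < d := Nat.mod_lt _ hd0
  constructor
  · intro h
    have hdvd : d ∣ d ^ 2 := ⟨d, (pow_two d)⟩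
    have hm1 : (j + k) % d ^ 2 % d = (j + k) % d := Nat.mod_mod_of_dvd _ hdvd
    have hpos : 1 ≤ (l + 1) * d := by
      calc 1 ≤ d := by omega
      _ ≤ (l + 1) * d := Nat.le_mul_of_pos_left d (by omega)
    have hm2 : (j + k) % d ^ 2 = (l + 1) * d - 1 := by omega
    have hm3 : ((l + 1) * d - 1) % d = d - 1 := by
      have h5 : (l + 1) * d - 1 = d - 1 + l * d := by
        rw [add_mul, one_mul]; omega
      rw [h5, Nat.add_mul_mod_self_right, Nat.mod_eq_of_lt (by omega)]
    have hm4 : (j + k) % d = d - 1 := by rw [← hm1, hm2, hm3]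
    have hm5 : (j % d + k) % d = d - 1 := by
      rwa [Nat.add_mod, Nat.mod_eq_of_lt hk] at hm4
    have hke : k = d - 1 - j % d := by
      rcases Nat.lt_or_ge (j % d + k) d with hc | hc
      · rw [Nat.mod_eq_of_lt hc] at hm5; omega
      · have h6 : j % d + k - d < d := by omega
        rw [Nat.mod_eq_sub_mod hc, Nat.mod_eq_of_lt h6] at hm5; omega
    subst hke
    refine ⟨rfl, ?_⟩
    rw [Nat.mod_eq_of_lt hlt] at h
    have h7 : (j / d + 1) * d = (l + 1) * d := by omega
    have := Nat.eq_of_mul_eq_mul_right hd0 h7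
    omega
  · rintro ⟨rfl, rfl⟩
    rw [Nat.mod_eq_of_lt hlt]
    exact heq


/-- The modified zero-order B-spline `B*_l` (with `l` 0-based, representing the
1-based index `l+1`): `B*_l(x) = 1` if `(l+1)·d − 1 < x ≤ (l+1)·d`, else `0`. -/
def Bspl (d : ℕ) (l : Fin d) (x : ℝ) : ℝ :=
  if (((l : ℕ) + 1) * d : ℝ) - 1 < x ∧ x ≤ (((l : ℕ) + 1) * d : ℝ) then 1 else 0

/-- The Kolmogorov–Arnold attention scoring family
`S_KAA = { x ↦ Σ_k Σ_l c_{k,l} · B*_l(x_k) : c ∈ ℝ^{d×d} }`. -/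
def SKAA (d : ℕ) : Set ((Fin d → ℝ) → ℝ) :=
  {s | ∃ c : Fin d → Fin d → ℝ, s = fun x => ∑ k, ∑ l, c k l * Bspl d l (x k)}

/-- MRD of Kolmogorov–Arnold attention: `MRD(S_KAA, P) ≤ δ` for every `δ > 0`. -/
theorem mrd_kaa_upper_bound (d : ℕ) (hd : 2 ≤ d) (δ : ℝ) (hδ : 0 < δ) :
    MRD (SKAA d) ≤ δ := by
  have hd0 : 0 < d := by omega
  unfold MRD
  apply ciSup_le
  intro π
  have hrow : ∀ (k l : Fin d), ((l : ℕ) + 1) * d - 1 - (k : ℕ) < d ^ 2 := by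
    intro k l
    have hk : (k : ℕ) < d := k.2
    have h1 : ((l : ℕ) + 1) * d ≤ d ^ 2 := by
      rw [pow_two]; exact Nat.mul_le_mul_right d (by omega)
    have h2 : d ≤ ((l : ℕ) + 1) * d := Nat.le_mul_of_pos_left d (by omega)
    set t := ((l : ℕ) + 1) * d
    set n := d ^ 2
    omega
  set c : Fin d → Fin d → ℝ := fun k l =>
    ((π.symm ⟨((l : ℕ) + 1) * d - 1 - (k : ℕ), hrow k l⟩ : ℕ) : ℝ) + 1 with hc
  have hmem : (fun x => ∑ k, ∑ l, c k l * Bspl d l (x k)) ∈ SKAA d := ⟨c, rfl⟩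
  set s₀ : SKAA d := ⟨_, hmem⟩ with hs₀
  have key : ∀ j : Fin (d ^ 2),
      (∑ k, ∑ l, c k l * Bspl d l (Pmat d j k)) = ((π.symm j : ℕ) : ℝ) + 1 := by
    intro j
    have hjlt : (j : ℕ) < d ^ 2 := j.2
    have hK : d - 1 - (j : ℕ) % d < d := by omega
    have hL : (j : ℕ) / d < d := by
      rw [Nat.div_lt_iff_lt_mul hd0]; exact lt_of_lt_of_eq hjlt (pow_two d)
    set K : Fin d := ⟨d - 1 - (j : ℕ) % d, hK⟩ with hKdef
    set L : Fin d := ⟨(j : ℕ) / d, hL⟩ with hLdef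
    have hB : ∀ (k l : Fin d), Bspl d l (Pmat d j k) = if l = L ∧ k = K then 1 else 0 := by
      intro k l
      unfold Bspl Pmat
      refine if_congr ?_ rfl rfl
      have hcast : ((((l : ℕ) + 1) * d : ℕ) : ℝ) = (((l : ℕ) + 1) * d : ℝ) := by
        push_cast; ring
      rw [← hcast]
      have hnk := nat_key d hd (j : ℕ) hjlt (k : ℕ) (l : ℕ) k.2 l.2
      constructor
      · rintro ⟨h1, h2⟩
        have hb1 : ((((l : ℕ) + 1) * d : ℕ) : ℝ) < ((((j : ℕ) + (k : ℕ)) % d ^ 2 + 1 : ℕ) : ℝ) + 1 := by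
          linarith
        have hb2 : (((l : ℕ) + 1) * d : ℕ) < ((j : ℕ) + (k : ℕ)) % d ^ 2 + 1 + 1 := by
          exact_mod_cast hb1
        have hb3 : ((j : ℕ) + (k : ℕ)) % d ^ 2 + 1 ≤ ((l : ℕ) + 1) * d := by
          exact_mod_cast h2
        have heq : ((j : ℕ) + (k : ℕ)) % d ^ 2 + 1 = ((l : ℕ) + 1) * d := by omega
        obtain ⟨hk', hl'⟩ := hnk.mp heq
        exact ⟨Fin.ext hl', Fin.ext hk'⟩
      · rintro ⟨rfl, rfl⟩
        have heq : ((j : ℕ) + (K : ℕ)) % d ^ 2 + 1 = ((L : ℕ) + 1) * d := hnk.mpr ⟨rfl, rfl⟩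
        constructor
        · have : ((((L : ℕ) + 1) * d : ℕ) : ℝ) ≤ ((((j : ℕ) + (K : ℕ)) % d ^ 2 + 1 : ℕ) : ℝ) := by
            exact_mod_cast heq.ge
          linarith
        · exact_mod_cast heq.le
    calc (∑ k, ∑ l, c k l * Bspl d l (Pmat d j k))
        = ∑ k, ∑ l, if l = L ∧ k = K then c k l else 0 := by
          refine Finset.sum_congr rfl fun k _ => Finset.sum_congr rfl fun l _ => ?_
          rw [hB k l]; split <;> simp
      _ = c K L := by
          simp [ite_and, Finset.sum_ite_eq']
      _ = ((π.symm j : ℕ) : ℝ) + 1 := by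
          have hjj : (⟨((L : ℕ) + 1) * d - 1 - (K : ℕ), hrow K L⟩ : Fin (d ^ 2)) = j := by
            apply Fin.ext
            have heq2 := (jk_facts d hd (j : ℕ) hjlt).2
            show ((j : ℕ) / d + 1) * d - 1 - (d - 1 - (j : ℕ) % d) = (j : ℕ)
            rw [← heq2]
            omega
          show ((π.symm ⟨((L : ℕ) + 1) * d - 1 - (K : ℕ), hrow K L⟩ : ℕ) : ℝ) + 1 = _
          rw [hjj]
  have hb : BddBelow (Set.range fun s : SKAA d =>
      Real.sqrt (∑ j : Fin (d ^ 2),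
        (s.1 (fun k => Pmat d j k) - (((π.symm j : ℕ) : ℝ) + 1)) ^ 2)) := by
    refine ⟨0, ?_⟩
    rintro x ⟨s, rfl⟩
    exact Real.sqrt_nonneg _
  refine le_trans (ciInf_le hb s₀) ?_
  have hz : (∑ j : Fin (d ^ 2),
      (s₀.1 (fun k => Pmat d j k) - (((π.symm j : ℕ) : ℝ) + 1)) ^ 2) = 0 := by
    apply Finset.sum_eq_zero
    intro j _
    have h1 : s₀.1 (fun k => Pmat d j k) = ((π.symm j : ℕ) : ℝ) + 1 := key j
    rw [h1]; ring
  rw [hz, Real.sqrt_zero]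
  exact hδ.le

end
end

section
/- Let d ≥ 1, N = d², and let P be the N×d matrix with P_{j,k} = ((j+k−2) mod N) + 1. Then for every function r : {1,…,N} → ℝ there exist real coefficients c_{k,l} (1 ≤ k, l ≤ d) such that for every j ∈ {1,…,N}, Σ_{k=1}^d Σ_{l=1}^d c_{k,l} · B*_l(P_{j,k}) = r(j); that is, the single-layer zero-order-spline KAN scoring functions exactly interpolate any prescribed score values on the rows of P. -/
noncomputable section

lemma Bspl_nat (d : ℕ) (l : Fin d) (n : ℕ) :
    Bspl d l ((n : ℝ)) = if n = ((l : ℕ) + 1) * d then 1 else 0 := by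
  unfold Bspl
  congr 1
  rw [eq_iff_iff]
  constructor
  · rintro ⟨h1, h2⟩
    have h1' : ((l : ℕ) + 1) * d < n + 1 := by
      have : ((((l : ℕ) + 1) * d : ℕ) : ℝ) < (n : ℝ) + 1 := by push_cast; linarith
      exact_mod_cast this
    have h2' : n ≤ ((l : ℕ) + 1) * d := by
      have : (n : ℝ) ≤ ((((l : ℕ) + 1) * d : ℕ) : ℝ) := by push_cast; linarith
      exact_mod_cast this
    omega
  · rintro rfl
    push_cast
    constructor
    · linarith
    · exact le_refl _

lemma key_arith (d q s a kk : ℕ) (hd : 1 ≤ d) (_hq : q < d) (hs : s < d) (hk : kk < d)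
    (heq : d * q + s + kk + 1 = (a + 1) * d) : a = q ∧ kk = d - 1 - s := by
  have hmod : (s + kk + 1) % d = 0 := by
    have h1 : (d * q + (s + kk + 1)) % d = ((a + 1) * d) % d := by
      rw [show d * q + (s + kk + 1) = d * q + s + kk + 1 by ring, heq]
    simpa [Nat.mul_add_mod, Nat.mul_mod_left] using h1
  obtain ⟨t, ht⟩ := Nat.dvd_of_mod_eq_zero hmod
  have ht0 : t ≠ 0 := by
    rintro rfl
    simp at ht
  have hub : d * t < d * 2 := by
    have h2 : d * 2 = d + d := by ring
    omega
  have ht1 : t = 1 := by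
    have := Nat.lt_of_mul_lt_mul_left hub
    omega
  subst ht1
  have hd1 : d * 1 = d := by ring
  have hskd : s + kk + 1 = d := by omega
  have haq : (a + 1) * d = (q + 1) * d := by
    have h3 : (q + 1) * d = d * q + d := by ring
    omega
  have : a + 1 = q + 1 := Nat.eq_of_mul_eq_mul_right (by omega) haq
  omega

/-- The single-layer zero-order-spline KAN scoring functions exactly interpolate any
prescribed score values on the rows of `P`: for any target `r : {1,…,N} → ℝ` there are
coefficients `c` with `Σ_k Σ_l c_{k,l} · B*_l(P_{j,k}) = r(j)` for all `j`. -/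
theorem kan_exact_interpolation (d : ℕ) (hd : 1 ≤ d) (r : Fin (d ^ 2) → ℝ) :
    ∃ c : Fin d → Fin d → ℝ,
      ∀ j : Fin (d ^ 2), ∑ k, ∑ l, c k l * Bspl d l (Pmat d j k) = r j := by
  have hdd : d ^ 2 = d * d := sq d
  have hidx : ∀ (k l : Fin d), ((l : ℕ) + 1) * d - 1 - (k : ℕ) < d ^ 2 := by
    intro k l
    have h1 : ((l : ℕ) + 1) * d ≤ d * d := Nat.mul_le_mul_right d l.isLt
    have h2 : 1 * 1 ≤ d * d := Nat.mul_le_mul hd hd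
    omega
  refine ⟨fun k l => r ⟨((l : ℕ) + 1) * d - 1 - (k : ℕ), hidx k l⟩, ?_⟩
  intro j
  set q := (j : ℕ) / d with hqdef
  set s := (j : ℕ) % d with hsdef
  have hs : s < d := Nat.mod_lt _ (by omega)
  have hj : (j : ℕ) = d * q + s := (Nat.div_add_mod (j : ℕ) d).symm
  have hq : q < d := by
    have hjlt : (j : ℕ) < d * d := by rw [← hdd]; exact j.isLt
    exact Nat.div_lt_of_lt_mul hjlt
  have hk0lt : d - 1 - s < d := by omega
  have hiff : ∀ (k l : Fin d),
      (((j : ℕ) + (k : ℕ)) % d ^ 2 + 1 = ((l : ℕ) + 1) * d) ↔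
        (k = (⟨d - 1 - s, hk0lt⟩ : Fin d) ∧ l = (⟨q, hq⟩ : Fin d)) := by
    intro k l
    constructor
    · intro h
      by_cases hcase : (j : ℕ) + (k : ℕ) < d ^ 2
      · rw [Nat.mod_eq_of_lt hcase] at h
        have heq : d * q + s + (k : ℕ) + 1 = ((l : ℕ) + 1) * d := by omega
        obtain ⟨ha, hb⟩ := key_arith d q s (l : ℕ) (k : ℕ) hd hq hs k.isLt heq
        exact ⟨Fin.ext hb, Fin.ext ha⟩
      · exfalso
        push_neg at hcase
        have hjlt := j.isLt
        have hklt := k.isLt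
        have hdle : d ≤ d ^ 2 := Nat.le_self_pow (by norm_num) d
        have hm : ((j : ℕ) + (k : ℕ)) % d ^ 2 = (j : ℕ) + (k : ℕ) - d ^ 2 := by
          have hlt : (j : ℕ) + (k : ℕ) - d ^ 2 < d ^ 2 := by omega
          rw [Nat.mod_eq_sub_mod hcase, Nat.mod_eq_of_lt hlt]
        rw [hm] at h
        have h1 : d * (q + 1) ≤ d * d := Nat.mul_le_mul_left d (by omega)
        have h2 : d ≤ ((l : ℕ) + 1) * d := Nat.le_mul_of_pos_left d (by omega)
        have h3 : d * (q + 1) = d * q + d := by ring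
        omega
    · rintro ⟨rfl, rfl⟩
      show ((j : ℕ) + (d - 1 - s)) % d ^ 2 + 1 = (q + 1) * d
      have h3 : d * (q + 1) = d * q + d := by ring
      have h1 : d * (q + 1) ≤ d * d := Nat.mul_le_mul_left d (by omega)
      have h4 : (q + 1) * d = d * q + d := by ring
      have h5 : 1 * 1 ≤ d * d := Nat.mul_le_mul hd hd
      have hlt : (j : ℕ) + (d - 1 - s) < d ^ 2 := by omega
      rw [Nat.mod_eq_of_lt hlt]
      omega
  have hterm : ∀ (k l : Fin d),
      r ⟨((l : ℕ) + 1) * d - 1 - (k : ℕ), hidx k l⟩ * Bspl d l (Pmat d j k)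
      = if k = (⟨d - 1 - s, hk0lt⟩ : Fin d) ∧ l = (⟨q, hq⟩ : Fin d) then
          r ⟨((l : ℕ) + 1) * d - 1 - (k : ℕ), hidx k l⟩ else 0 := by
    intro k l
    unfold Pmat
    rw [Bspl_nat, if_congr (hiff k l) rfl rfl]
    split_ifs with h
    · rw [mul_one]
    · rw [mul_zero]
  have hsum : ∀ k : Fin d,
      (∑ l, if k = (⟨d - 1 - s, hk0lt⟩ : Fin d) ∧ l = (⟨q, hq⟩ : Fin d) then
          r ⟨((l : ℕ) + 1) * d - 1 - (k : ℕ), hidx k l⟩ else 0)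
      = if k = (⟨d - 1 - s, hk0lt⟩ : Fin d) then
          r ⟨(q + 1) * d - 1 - (k : ℕ), hidx k ⟨q, hq⟩⟩ else 0 := by
    intro k
    by_cases hk : k = (⟨d - 1 - s, hk0lt⟩ : Fin d)
    · simp [hk]
    · simp [hk]
  show (∑ k : Fin d, ∑ l : Fin d,
      r ⟨((l : ℕ) + 1) * d - 1 - (k : ℕ), hidx k l⟩ * Bspl d l (Pmat d j k)) = r j
  calc (∑ k : Fin d, ∑ l : Fin d,
        r ⟨((l : ℕ) + 1) * d - 1 - (k : ℕ), hidx k l⟩ * Bspl d l (Pmat d j k))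
      = ∑ k, ∑ l, if k = (⟨d - 1 - s, hk0lt⟩ : Fin d) ∧ l = (⟨q, hq⟩ : Fin d) then
          r ⟨((l : ℕ) + 1) * d - 1 - (k : ℕ), hidx k l⟩ else 0 :=
        Finset.sum_congr rfl fun k _ => Finset.sum_congr rfl fun l _ => hterm k l
    _ = ∑ k, if k = (⟨d - 1 - s, hk0lt⟩ : Fin d) then
          r ⟨(q + 1) * d - 1 - (k : ℕ), hidx k ⟨q, hq⟩⟩ else 0 :=
        Finset.sum_congr rfl fun k _ => hsum k
    _ = r ⟨(q + 1) * d - 1 - (d - 1 - s), hidx ⟨d - 1 - s, hk0lt⟩ ⟨q, hq⟩⟩ := by simp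
    _ = r j := by
        congr 1
        apply Fin.ext
        show (q + 1) * d - 1 - (d - 1 - s) = (j : ℕ)
        have h4 : (q + 1) * d = d * q + d := by ring
        omega

end
end

section
/- Let d ≥ 2, N = d², and let P be the N×d matrix with P_{j,k} = ((j+k−2) mod N) + 1. Then the maximum ranking distances of the three scoring-function families on P satisfy MRD(S_KAA, P) ≤ MRD(S_MLP, P) ≤ MRD(S_LT, P). -/
noncomputable section

/- ### Auxiliary lemmas -/

lemma key_nat (d q r k l : ℕ) (hd : 2 ≤ d) (hr : r < d) (hk : k < d) (hl : l < d) :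
    q * d + r + k = l * d + (d - 1) ↔ (k = d - 1 - r ∧ l = q) := by
  constructor
  · intro h
    have hq : q = l := by
      rcases lt_trichotomy q l with h' | h' | h'
      · have h2 : (q + 1) * d ≤ l * d := Nat.mul_le_mul_right d h'
        rw [add_mul, one_mul] at h2
        omega
      · exact h'
      · have h2 : (l + 1) * d ≤ q * d := Nat.mul_le_mul_right d h'
        rw [add_mul, one_mul] at h2
        omega
    subst hq
    omega
  · rintro ⟨rfl, rfl⟩
    omega

lemma cond_iff (d j k l : ℕ) (hd : 2 ≤ d) (hj : j < d ^ 2) (hk : k < d) (hl : l < d) :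
    (j + k) % d ^ 2 + 1 = (l + 1) * d ↔ (k = d - 1 - j % d ∧ l = j / d) := by
  have hd0 : 0 < d := by omega
  have hr : j % d < d := Nat.mod_lt _ hd0
  have hq : j / d < d := Nat.div_lt_of_lt_mul (by rw [← pow_two]; exact hj)
  have hdm : d * (j / d) + j % d = j := Nat.div_add_mod j d
  have hdm' : (j / d) * d + j % d = j := by rw [mul_comm] at hdm; exact hdm
  have key := key_nat d (j / d) (j % d) k l hd hr hk hl
  have hXle : l * d + d ≤ d ^ 2 := by
    rw [pow_two]
    calc l * d + d = (l + 1) * d := by ring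
      _ ≤ d * d := Nat.mul_le_mul_right d (by omega)
  have hX : (l + 1) * d = l * d + d := by ring
  rw [hX]
  rcases Nat.lt_or_ge (j + k) (d ^ 2) with h | h
  · rw [Nat.mod_eq_of_lt h]
    omega
  · have hmod : (j + k) % d ^ 2 = j + k - d ^ 2 := by
      rw [Nat.mod_eq_sub_mod h]
      exact Nat.mod_eq_of_lt (by omega)
    rw [hmod]
    constructor
    · intro hh; omega
    · rintro ⟨rfl, rfl⟩; omega

lemma bspl_pmat (d : ℕ) (j : Fin (d ^ 2)) (k l : Fin d) :
    Bspl d l (Pmat d j k) =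
      if ((j : ℕ) + (k : ℕ)) % d ^ 2 + 1 = ((l : ℕ) + 1) * d then 1 else 0 := by
  unfold Bspl Pmat
  refine if_congr ?_ rfl rfl
  have hcast : ((((l : ℕ) : ℝ) + 1) * (d : ℝ)) = ((((l : ℕ) + 1) * d : ℕ) : ℝ) := by
    push_cast; ring
  rw [hcast]
  constructor
  · rintro ⟨h1, h2⟩
    have h2' : ((j : ℕ) + (k : ℕ)) % d ^ 2 + 1 ≤ ((l : ℕ) + 1) * d := by exact_mod_cast h2
    have h1' : ((l : ℕ) + 1) * d < ((j : ℕ) + (k : ℕ)) % d ^ 2 + 1 + 1 := by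
      have := sub_lt_iff_lt_add.mp h1
      exact_mod_cast (by push_cast at this ⊢; linarith :
        ((((l : ℕ) + 1) * d : ℕ) : ℝ) < ((((j : ℕ) + (k : ℕ)) % d ^ 2 + 1 + 1 : ℕ) : ℝ))
    omega
  · intro h
    rw [h]
    constructor
    · push_cast; linarith
    · exact le_refl _

lemma idx_lt (d : ℕ) (hd : 2 ≤ d) (k l : Fin d) :
    (l : ℕ) * d + (d - 1 - (k : ℕ)) < d ^ 2 := by
  have hl := l.isLt
  have hk := k.isLt
  calc (l : ℕ) * d + (d - 1 - (k : ℕ)) < (l : ℕ) * d + d := by omega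
    _ = ((l : ℕ) + 1) * d := by ring
    _ ≤ d * d := Nat.mul_le_mul_right d (by omega)
    _ = d ^ 2 := (pow_two d).symm

/-- The KAA coefficients realizing a given target ranking exactly. -/
def ckaa (d : ℕ) (hd : 2 ≤ d) (π : Equiv.Perm (Fin (d ^ 2))) (k l : Fin d) : ℝ :=
  ((π.symm ⟨(l : ℕ) * d + (d - 1 - (k : ℕ)), idx_lt d hd k l⟩ : ℕ) : ℝ) + 1

lemma score_eq_s5 (d : ℕ) (hd : 2 ≤ d) (π : Equiv.Perm (Fin (d ^ 2))) (j : Fin (d ^ 2)) :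
    ∑ k, ∑ l, ckaa d hd π k l * Bspl d l (Pmat d j k) = ((π.symm j : ℕ) : ℝ) + 1 := by
  have hd0 : 0 < d := by omega
  have hr : (j : ℕ) % d < d := Nat.mod_lt _ hd0
  have hq : (j : ℕ) / d < d := Nat.div_lt_of_lt_mul (by rw [← pow_two]; exact j.isLt)
  set k₀ : Fin d := ⟨d - 1 - (j : ℕ) % d, by omega⟩ with hk₀
  set l₀ : Fin d := ⟨(j : ℕ) / d, hq⟩ with hl₀
  have hB : ∀ (k l : Fin d), Bspl d l (Pmat d j k) = if (k = k₀ ∧ l = l₀) then (1 : ℝ) else 0 := by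
    intro k l
    rw [bspl_pmat]
    refine if_congr ?_ rfl rfl
    rw [cond_iff d (j : ℕ) (k : ℕ) (l : ℕ) hd j.isLt k.isLt l.isLt]
    constructor
    · rintro ⟨h1, h2⟩
      exact ⟨Fin.ext h1, Fin.ext h2⟩
    · rintro ⟨rfl, rfl⟩
      exact ⟨rfl, rfl⟩
  calc ∑ k, ∑ l, ckaa d hd π k l * Bspl d l (Pmat d j k)
      = ∑ k, ∑ l, if (k = k₀ ∧ l = l₀) then ckaa d hd π k l else 0 := by
        refine Finset.sum_congr rfl fun k _ => Finset.sum_congr rfl fun l _ => ?_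
        rw [hB]
        by_cases h : (k = k₀ ∧ l = l₀) <;> simp [h]
    _ = ckaa d hd π k₀ l₀ := by
        rw [Finset.sum_eq_single k₀]
        · rw [Finset.sum_eq_single l₀]
          · simp
          · intro l _ hl; simp [hl]
          · intro h; exact absurd (Finset.mem_univ l₀) h
        · intro k _ hk
          apply Finset.sum_eq_zero
          intro l _
          simp [hk]
        · intro h; exact absurd (Finset.mem_univ k₀) h
    _ = ((π.symm j : ℕ) : ℝ) + 1 := by
        unfold ckaa
        have hfin : (⟨(l₀ : ℕ) * d + (d - 1 - (k₀ : ℕ)), idx_lt d hd k₀ l₀⟩ :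
            Fin (d ^ 2)) = j := by
          apply Fin.ext
          show (j : ℕ) / d * d + (d - 1 - (d - 1 - (j : ℕ) % d)) = (j : ℕ)
          have hdm : d * ((j : ℕ) / d) + (j : ℕ) % d = (j : ℕ) := Nat.div_add_mod _ _
          have hdm2 : (j : ℕ) / d * d = d * ((j : ℕ) / d) := mul_comm _ _
          omega
        rw [hfin]

lemma pmat_nonneg (d : ℕ) (j : Fin (d ^ 2)) (k : Fin d) : 0 ≤ Pmat d j k := by
  unfold Pmat
  positivity

/-- Comparison of expressive power: `MRD(S_KAA, P) ≤ MRD(S_MLP, P) ≤ MRD(S_LT, P)`. -/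
theorem mrd_comparison (d : ℕ) (hd : 2 ≤ d) :
    MRD (SKAA d) ≤ MRD (SMLP d) ∧ MRD (SMLP d) ≤ MRD (SLT d) := by
  haveI hLT : Nonempty (SLT d) :=
    ⟨⟨fun x => ∑ k, (0 : Fin d → ℝ) k * x k, ⟨0, rfl⟩⟩⟩
  haveI hMLP : Nonempty (SMLP d) :=
    ⟨⟨fun x => ∑ i, (0 : Fin d → ℝ) i * max (∑ k, (0 : Matrix (Fin d) (Fin d) ℝ) i k * x k) 0,
      ⟨0, 0, rfl⟩⟩⟩
  haveI hKAA : Nonempty (SKAA d) :=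
    ⟨⟨fun x => ∑ k, ∑ l, (0 : Fin d → Fin d → ℝ) k l * Bspl d l (x k), ⟨0, rfl⟩⟩⟩
  unfold MRD
  have hbddMLP : BddAbove (Set.range fun π : Equiv.Perm (Fin (d ^ 2)) =>
      ⨅ s : SMLP d, Real.sqrt (∑ j : Fin (d ^ 2),
        (s.1 (fun k => Pmat d j k) - (((π.symm j : ℕ) : ℝ) + 1)) ^ 2)) :=
    Set.Finite.bddAbove (Set.finite_range _)
  have hbddLT : BddAbove (Set.range fun π : Equiv.Perm (Fin (d ^ 2)) =>
      ⨅ s : SLT d, Real.sqrt (∑ j : Fin (d ^ 2),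
        (s.1 (fun k => Pmat d j k) - (((π.symm j : ℕ) : ℝ) + 1)) ^ 2)) :=
    Set.Finite.bddAbove (Set.finite_range _)
  have hbelow : ∀ (S : Set ((Fin d → ℝ) → ℝ)) (π : Equiv.Perm (Fin (d ^ 2))),
      BddBelow (Set.range fun s : S => Real.sqrt (∑ j : Fin (d ^ 2),
        (s.1 (fun k => Pmat d j k) - (((π.symm j : ℕ) : ℝ) + 1)) ^ 2)) := by
    intro S π
    exact ⟨0, by rintro x ⟨s, rfl⟩; exact Real.sqrt_nonneg _⟩
  constructor
  · -- KAA ≤ MLP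
    refine ciSup_le fun π => ?_
    have h0 : (⨅ s : SKAA d, Real.sqrt (∑ j : Fin (d ^ 2),
        (s.1 (fun k => Pmat d j k) - (((π.symm j : ℕ) : ℝ) + 1)) ^ 2)) ≤ 0 := by
      refine ciInf_le_of_le (hbelow _ π)
        ⟨fun x => ∑ k, ∑ l, ckaa d hd π k l * Bspl d l (x k), ⟨ckaa d hd π, rfl⟩⟩ ?_
      have : (∑ j : Fin (d ^ 2),
          ((∑ k, ∑ l, ckaa d hd π k l * Bspl d l (Pmat d j k)) -
            (((π.symm j : ℕ) : ℝ) + 1)) ^ 2) = 0 := by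
        apply Finset.sum_eq_zero
        intro j _
        rw [score_eq_s5 d hd π j]
        ring
      rw [this, Real.sqrt_zero]
    refine le_trans h0 ?_
    refine le_trans ?_ (le_ciSup hbddMLP π)
    exact le_ciInf fun s => Real.sqrt_nonneg _
  · -- MLP ≤ LT
    refine ciSup_le fun π => ?_
    refine le_trans ?_ (le_ciSup hbddLT π)
    refine le_ciInf fun s => ?_
    obtain ⟨w, hw⟩ := s.2
    refine ciInf_le_of_le (hbelow _ π)
      ⟨fun x => ∑ i, w i * max (∑ k, (1 : Matrix (Fin d) (Fin d) ℝ) i k * x k) 0,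
        ⟨1, w, rfl⟩⟩ ?_
    have heq : ∀ j : Fin (d ^ 2),
        (∑ i, w i * max (∑ k, (1 : Matrix (Fin d) (Fin d) ℝ) i k * Pmat d j k) 0)
          = s.1 (fun k => Pmat d j k) := by
      intro j
      rw [hw]
      refine Finset.sum_congr rfl fun i _ => ?_
      have h1 : (∑ k, (1 : Matrix (Fin d) (Fin d) ℝ) i k * Pmat d j k) = Pmat d j i := by
        simp [Matrix.one_apply]
      rw [h1, max_eq_left (pmat_nonneg d j i)]
    simp only [heq]
    exact le_refl _

end
end

section
/- Let d ≥ 2 and N = d². Then for every injective map f : {1,…,N+1−d} → {1,…,N}, Σ_{i=1}^{N+1−d} ( f(i) − (N+1)/2 )² ≤ (N³ − N − d³ + 3d² − 2d) / 12. -/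
noncomputable section

open Finset

lemma pair_sum_identity {α : Type*} (S : Finset α) (v : α → ℝ) :
    ∑ x ∈ S, ∑ y ∈ S, (v x - v y)^2
      = 2 * S.card * (∑ x ∈ S, (v x)^2) - 2 * (∑ x ∈ S, v x)^2 := by
  have h : ∀ x ∈ S, ∑ y ∈ S, (v x - v y)^2
      = (S.card : ℝ) * (v x)^2 - 2 * v x * (∑ y ∈ S, v y) + ∑ y ∈ S, (v y)^2 := by
    intro x _
    have e : ∀ y ∈ S, (v x - v y)^2 = (v x)^2 - 2 * v x * v y + (v y)^2 := by
      intros; ring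
    rw [Finset.sum_congr rfl e, Finset.sum_add_distrib, Finset.sum_sub_distrib,
        Finset.sum_const, ← Finset.mul_sum, nsmul_eq_mul]
  rw [Finset.sum_congr rfl h, Finset.sum_add_distrib, Finset.sum_sub_distrib,
      Finset.sum_const, nsmul_eq_mul]
  rw [← Finset.mul_sum, ← Finset.sum_mul, ← Finset.mul_sum]
  ring

lemma gap_le {k : ℕ} (e : Fin k → ℕ) (he : StrictMono e) :
    ∀ (m : ℕ) (i j : Fin k), (i : ℕ) + m = (j : ℕ) → e i + m ≤ e j := by
  intro m
  induction m with
  | zero =>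
      intro i j h
      have : i = j := Fin.ext (by omega)
      simp [this]
  | succ m ih =>
      intro i j h
      have hj' : (i:ℕ) + m < k := by omega
      have h1 := ih i ⟨(i:ℕ)+m, hj'⟩ rfl
      have h2 : e ⟨(i:ℕ)+m, hj'⟩ < e j := he (by simp [Fin.lt_def]; omega)
      omega

lemma model_sum (k : ℕ) :
    ∑ i ∈ Finset.range k, ∑ j ∈ Finset.range k, ((i:ℝ) - (j:ℝ))^2
      = (k:ℝ)^2*((k:ℝ)^2-1)/6 := by
  rw [pair_sum_identity (Finset.range k) (fun i => (i:ℝ)), sum_range_cast,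
      sum_range_sq_cast, Finset.card_range]
  ring

lemma key (T : Finset ℕ) (c : ℝ) :
    ((T.card:ℝ)^3 - T.card) / 12 ≤ ∑ x ∈ T, ((x:ℝ) - c)^2 := by
  rcases Nat.eq_zero_or_pos T.card with h0 | hpos
  · rw [Finset.card_eq_zero.mp h0]
    simp [h0]
  set k := T.card with hk
  set e : Fin k ↪o ℕ := T.orderEmbOfFin rfl with he
  have hmem : Finset.univ.image (fun i : Fin k => e i) = T := by
    apply Finset.coe_injective
    simp only [Finset.coe_image, Finset.coe_univ, Set.image_univ]
    exact Finset.range_orderEmbOfFin T rfl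
  have hinj : ∀ x ∈ (Finset.univ : Finset (Fin k)), ∀ y ∈ Finset.univ,
      e x = e y → x = y := fun x _ y _ h => e.injective h
  -- reindex sums over T to sums over Fin k
  have hre : ∀ g : ℕ → ℝ, ∑ x ∈ T, g x = ∑ i : Fin k, g (e i) := by
    intro g
    rw [← hmem, Finset.sum_image hinj]
  -- pair identity on T with v x = x - c
  have hid := pair_sum_identity T (fun x => (x:ℝ) - c)
  have hsame : ∑ x ∈ T, ∑ y ∈ T, (((x:ℝ) - c) - ((y:ℝ) - c))^2
      = ∑ x ∈ T, ∑ y ∈ T, ((x:ℝ) - (y:ℝ))^2 := by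
    apply Finset.sum_congr rfl; intro x _
    apply Finset.sum_congr rfl; intro y _
    ring
  -- lower bound on the pair sum
  have hdouble : ∑ x ∈ T, ∑ y ∈ T, ((x:ℝ) - (y:ℝ))^2
      = ∑ i : Fin k, ∑ j : Fin k, ((e i : ℝ) - (e j : ℝ))^2 := by
    rw [hre (fun x => ∑ y ∈ T, ((x:ℝ) - (y:ℝ))^2)]
    apply Finset.sum_congr rfl; intro i _
    exact hre (fun y => ((e i : ℝ) - (y:ℝ))^2)
  have hterm : ∀ i j : Fin k, ((i:ℝ) - (j:ℝ))^2 ≤ ((e i : ℝ) - (e j : ℝ))^2 := by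
    have hgap : ∀ i j : Fin k, (i:ℕ) ≤ (j:ℕ) → ((j:ℝ) - (i:ℝ)) ≤ ((e j : ℝ) - (e i : ℝ)) := by
      intro i j hij
      have := gap_le e e.strictMono ((j:ℕ) - (i:ℕ)) i j (by omega)
      have hc : ((e i : ℕ) : ℝ) + (((j:ℕ) - (i:ℕ) : ℕ) : ℝ) ≤ ((e j : ℕ) : ℝ) := by
        exact_mod_cast this
      rw [Nat.cast_sub hij] at hc
      linarith
    intro i j
    rcases le_total (i:ℕ) (j:ℕ) with h | h
    · have hb := hgap i j h
      have ha : (i:ℝ) ≤ (j:ℝ) := by exact_mod_cast h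
      have : ((e i : ℝ) - (e j : ℝ))^2 = ((e j : ℝ) - (e i : ℝ))^2 := by ring
      rw [this]
      apply sq_le_sq' <;> linarith
    · have hb := hgap j i h
      have ha : (j:ℝ) ≤ (i:ℝ) := by exact_mod_cast h
      apply sq_le_sq' <;> linarith
  have hconv : ∑ i ∈ Finset.range k, ∑ j ∈ Finset.range k, ((i:ℝ)-(j:ℝ))^2
      = ∑ i : Fin k, ∑ j : Fin k, (((i:ℕ):ℝ)-((j:ℕ):ℝ))^2 := by
    rw [← Fin.sum_univ_eq_sum_range (fun i => ∑ j ∈ Finset.range k, ((i:ℝ)-(j:ℝ))^2)]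
    apply Finset.sum_congr rfl; intro i _
    rw [← Fin.sum_univ_eq_sum_range (fun j => (((i:ℕ):ℝ)-(j:ℝ))^2)]
  have hlow : (k:ℝ)^2*((k:ℝ)^2-1)/6 ≤ ∑ x ∈ T, ∑ y ∈ T, ((x:ℝ) - (y:ℝ))^2 := by
    rw [hdouble, ← model_sum k, hconv]
    apply Finset.sum_le_sum
    intro i _
    exact Finset.sum_le_sum (fun j _ => hterm i j)
  -- combine
  have hsq : (0:ℝ) ≤ (∑ x ∈ T, ((x:ℝ) - c))^2 := sq_nonneg _
  rw [hsame] at hid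
  have hkpos : (1:ℝ) ≤ (k:ℝ) := by exact_mod_cast hpos
  rw [← hk] at hid
  nlinarith [hid, hlow, hsq, hkpos, sq_nonneg ((k:ℝ) - 1)]

lemma total_sum (n : ℕ) :
    ∑ j ∈ Finset.range n, ((j:ℝ) + 1 - ((n:ℝ)+1)/2)^2 = ((n:ℝ)^3 - n)/12 := by
  have e : ∀ j ∈ Finset.range n, ((j:ℝ) + 1 - ((n:ℝ)+1)/2)^2
      = (j:ℝ)^2 + (1-(n:ℝ)) * j + ((1-(n:ℝ))/2)^2 := by intro j _; ring
  rw [Finset.sum_congr rfl e, Finset.sum_add_distrib, Finset.sum_add_distrib,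
      ← Finset.mul_sum, Finset.sum_const, nsmul_eq_mul, Finset.card_range,
      sum_range_cast, sum_range_sq_cast]
  ring


/-- For any injective assignment `f` of distinct values in `{1,…,N}` (`N = d²`) to the
indices `1,…,N+1−d`, the total squared deviation of the values from `(N+1)/2` is at most
`(N³ − N − d³ + 3d² − 2d)/12`. (Here `f : Fin (d²+1−d) → Fin (d²)` with 0-based values,
so the assigned value is `f(i) + 1 ∈ {1,…,N}`.) -/
theorem injective_values_squared_deviation_upper_bound (d : ℕ) (hd : 2 ≤ d)
    (f : Fin (d ^ 2 + 1 - d) → Fin (d ^ 2)) (hf : Function.Injective f) :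
    ∑ i : Fin (d ^ 2 + 1 - d), (((f i : ℕ) : ℝ) + 1 - ((d : ℝ) ^ 2 + 1) / 2) ^ 2 ≤
      (((d : ℝ) ^ 2) ^ 3 - (d : ℝ) ^ 2 - (d : ℝ) ^ 3 + 3 * (d : ℝ) ^ 2 - 2 * (d : ℝ)) / 12 := by
  have hdn : d ≤ d ^ 2 := Nat.le_self_pow two_ne_zero d
  set c : ℝ := ((d:ℝ)^2 + 1)/2 with hc
  set G : Fin (d^2) → ℝ := fun v => (((v:ℕ):ℝ) + 1 - c)^2 with hG
  set S : Finset (Fin (d^2)) := Finset.univ.image f with hS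
  have hcard : S.card = d^2 + 1 - d := by
    rw [hS, Finset.card_image_of_injective _ hf, Finset.card_univ, Fintype.card_fin]
  have hccard : Sᶜ.card = d - 1 := by
    rw [Finset.card_compl, hcard, Fintype.card_fin]
    have key : ∀ n, d ≤ n → n - (n + 1 - d) = d - 1 := by intro n hn; omega
    exact key _ hdn
  -- sum over indices = sum over image
  have h1 : ∑ i : Fin (d^2+1-d), G (f i) = ∑ v ∈ S, G v :=
    (Finset.sum_image (fun x _ y _ h => hf h)).symm
  have h2 : ∑ v ∈ S, G v + ∑ v ∈ Sᶜ, G v = ∑ v : Fin (d^2), G v :=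
    Finset.sum_add_sum_compl S G
  -- total sum
  have h3 : ∑ v : Fin (d^2), G v = (((d:ℝ)^2)^3 - (d:ℝ)^2)/12 := by
    rw [hG]
    rw [Fin.sum_univ_eq_sum_range (fun j => ((j:ℝ) + 1 - c)^2)]
    have : c = (((d^2 : ℕ):ℝ) + 1)/2 := by push_cast; ring
    rw [this, total_sum (d^2)]
    push_cast; ring
  -- complement lower bound
  set T : Finset ℕ := Sᶜ.image (fun v : Fin (d^2) => (v:ℕ)) with hT
  have h4 : ∑ v ∈ Sᶜ, G v = ∑ x ∈ T, ((x:ℝ) - (c - 1))^2 := by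
    rw [hT, Finset.sum_image (fun x _ y _ h => Fin.val_injective h)]
    apply Finset.sum_congr rfl; intro v _
    rw [hG]; ring
  have h5 : T.card = d - 1 := by
    rw [hT, Finset.card_image_of_injective _ Fin.val_injective, hccard]
  have h6 := key T (c - 1)
  rw [h5] at h6
  have hcast : ((d - 1 : ℕ) : ℝ) = (d:ℝ) - 1 := by
    rw [Nat.cast_sub (by omega)]; norm_num
  rw [hcast] at h6
  have hring : (((d : ℝ) ^ 2) ^ 3 - (d : ℝ) ^ 2 - (d : ℝ) ^ 3 + 3 * (d : ℝ) ^ 2 - 2 * (d : ℝ)) / 12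
      = (((d:ℝ)^2)^3 - (d:ℝ)^2)/12 - (((d:ℝ)-1)^3 - ((d:ℝ)-1))/12 := by ring
  rw [hring]
  have hgoal : ∑ i : Fin (d^2+1-d), G (f i)
      ≤ (((d:ℝ)^2)^3 - (d:ℝ)^2)/12 - (((d:ℝ)-1)^3 - ((d:ℝ)-1))/12 := by
    rw [h1]
    linarith [h2, h3, h4, h6]
  exact hgoal

end
end

section
/- Let d ≥ 1, N = d², and let P be the N×d matrix with P_{j,k} = ((j+k−2) mod N) + 1. Let c ∈ ℝ^{d×d} and define the scoring function s : ℝ^d → ℝ by s(x) = Σ_{k=1}^d Σ_{l=1}^d c_{k,l} · B*_l(x_k). Then for every j ∈ {1,…,N}, writing j − 1 = α·d + β with 0 ≤ α, β ≤ d−1, the score of the j-th row of P equals a single coefficient: s(P_j) = c_{d−β, α+1}. -/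
noncomputable section

/-- For the KAN scoring function `s(x) = Σ_k Σ_l c_{k,l} B*_l(x_k)` and a row `j` of `P`
with (0-based) index `j = α·d + β`, `0 ≤ α, β ≤ d−1`, the score of the row is the single
coefficient `c_{d−β, α+1}` (1-based indices, i.e. `c (d−1−β) α` with 0-based indices). -/
theorem kan_score_is_single_coefficient (d : ℕ) (hd : 1 ≤ d) (c : Fin d → Fin d → ℝ)
    (j : Fin (d ^ 2)) (α β : ℕ) (hα : α < d) (hβ : β < d) (hj : (j : ℕ) = α * d + β) :
    ∑ k, ∑ l, c k l * Bspl d l (Pmat d j k) = c ⟨d - 1 - β, by omega⟩ ⟨α, hα⟩ := by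
  set k₀ : Fin d := ⟨d - 1 - β, by omega⟩ with hk₀
  set l₀ : Fin d := ⟨α, hα⟩ with hl₀
  have hdd : d ^ 2 = d * d := sq d
  -- the natural-number characterization of when the spline fires
  have key : ∀ (k l : Fin d),
      (((j : ℕ) + (k : ℕ)) % d ^ 2 + 1 = ((l : ℕ) + 1) * d) ↔ (k = k₀ ∧ l = l₀) := by
    intro k l
    have hk := k.isLt
    have hl := l.isLt
    constructor
    · intro h
      rcases lt_or_ge ((j : ℕ) + (k : ℕ)) (d ^ 2) with hlt | hge
      · rw [Nat.mod_eq_of_lt hlt, hj] at h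
        -- h : α*d + β + k + 1 = (l+1)*d
        have h1 : α * d < ((l : ℕ) + 1) * d := by omega
        have h2 : α < (l : ℕ) + 1 := Nat.lt_of_mul_lt_mul_right h1
        have h3 : ((l : ℕ) + 1) * d < (α + 2) * d := by
          have he : (α + 2) * d = α * d + d + d := by ring
          omega
        have h4 : (l : ℕ) + 1 < α + 2 := Nat.lt_of_mul_lt_mul_right h3
        have hlα : (l : ℕ) = α := by omega
        have h5 : ((l : ℕ) + 1) * d = α * d + d := by rw [hlα]; ring
        refine ⟨Fin.ext ?_, Fin.ext hlα⟩
        show (k : ℕ) = d - 1 - β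
        omega
      · exfalso
        rw [hj] at h hge
        have hα' : α * d + d ≤ d * d := by
          calc α * d + d = (α + 1) * d := by ring
          _ ≤ d * d := Nat.mul_le_mul_right d (by omega)
        have hm : (α * d + β + (k : ℕ)) % d ^ 2 = α * d + β + (k : ℕ) - d ^ 2 := by
          rw [Nat.mod_eq_sub_mod hge, Nat.mod_eq_of_lt]
          omega
        rw [hm] at h
        have hcancel := Nat.sub_add_cancel hge
        have hld : 1 * d ≤ ((l : ℕ) + 1) * d := Nat.mul_le_mul_right d (by omega)
        have h1d : 1 * d = d := one_mul d
        omega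
    · rintro ⟨rfl, rfl⟩
      show ((j : ℕ) + (d - 1 - β)) % d ^ 2 + 1 = (α + 1) * d
      have h5 : (α + 1) * d = α * d + d := by ring
      have hα' : α * d + d ≤ d * d := by
        calc α * d + d = (α + 1) * d := by ring
        _ ≤ d * d := Nat.mul_le_mul_right d (by omega)
      rw [hj]
      rw [Nat.mod_eq_of_lt (by omega)]
      omega
  -- rewrite each spline value as an indicator of the pair (k₀, l₀)
  have hB : ∀ (k l : Fin d), Bspl d l (Pmat d j k) = if k = k₀ ∧ l = l₀ then 1 else 0 := by
    intro k l
    unfold Bspl Pmat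
    set m : ℕ := ((j : ℕ) + (k : ℕ)) % d ^ 2 with hm
    by_cases h : m + 1 = ((l : ℕ) + 1) * d
    · rw [if_pos ((key k l).mp h), if_pos]
      have hc := congrArg (Nat.cast : ℕ → ℝ) h
      push_cast at hc
      constructor <;> push_cast <;> linarith
    · rw [if_neg (fun hc => h ((key k l).mpr hc)), if_neg]
      rintro ⟨h1, h2⟩
      apply h
      have h2' : m + 1 ≤ ((l : ℕ) + 1) * d := by exact_mod_cast h2
      have h1' : ((((l : ℕ) + 1) * d : ℕ) : ℝ) < ((m + 2 : ℕ) : ℝ) := by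
        push_cast at h1 ⊢; linarith
      have h1'' : ((l : ℕ) + 1) * d < m + 2 := by exact_mod_cast h1'
      omega
  simp only [hB, mul_ite, mul_one, mul_zero]
  rw [Finset.sum_eq_single k₀]
  · rw [Finset.sum_eq_single l₀]
    · simp
    · intro l _ hl; simp [hl]
    · simp
  · intro k _ hk
    apply Finset.sum_eq_zero
    intro l _
    simp [hk]
  · simp

end
end
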